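/- arXiv:2603.03098 — 3 statements merged into one kernel-verified Lean document; each statement's English description precedes it below -/
import Mathlib

section
/- Let G = (V, E, A) be a finite simple mixed graph. The map sending a cycle cover of G to its successor function (the function taking each vertex v to the vertex following v on the unique cycle of the cover through v) is a bijection between the set of cycle covers of G and the set of permutations π of V such that for every vertex v: π(v) ≠ v, π(π(v)) ≠ v, and either {v, π(v)} ∈ E or (v, π(v)) ∈ A. -/
/-- A mixed graph on a vertex set `V`: a set `E` of undirected edges (unordered pairs of
distinct vertices) and a set `A` of directed edges (ordered pairs of distinct vertices). -/
structure MixedGraph (V : Type*) where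
  E : Set (Sym2 V)
  A : Set (V × V)
  not_isDiag : ∀ e ∈ E, ¬ Sym2.IsDiag e
  ne_of_mem : ∀ a ∈ A, Prod.fst a ≠ Prod.snd a

namespace MixedGraph

variable {V : Type*}

/-- `Adj G u v`: one may travel from `u` to `v` along a single edge of `G`
(an undirected edge `{u, v}` or a directed edge `(u, v)`). -/
def Adj (G : MixedGraph V) (u v : V) : Prop :=
  s(u, v) ∈ G.E ∨ (u, v) ∈ G.A

/-- A mixed graph is simple if no two vertices are joined by more than one edge of `E ∪ A`
(counting a directed edge in either direction). -/
def Simple (G : MixedGraph V) : Prop :=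
  ∀ u v : V, ¬(s(u, v) ∈ G.E ∧ (u, v) ∈ G.A) ∧ ¬((u, v) ∈ G.A ∧ (v, u) ∈ G.A)

/-- The degree of a vertex: the number of edges of `E ∪ A` incident to it. -/
noncomputable def degree (G : MixedGraph V) (v : V) : ℕ :=
  {e | e ∈ G.E ∧ v ∈ e}.ncard + {a | a ∈ G.A ∧ (a.1 = v ∨ a.2 = v)}.ncard

/-- `Inc G v u`: some edge of `G` (undirected, or directed in either direction)
joins `v` and `u`. -/
def Inc (G : MixedGraph V) (v u : V) : Prop :=
  s(v, u) ∈ G.E ∨ (v, u) ∈ G.A ∨ (u, v) ∈ G.A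

/-- A cycle of a mixed graph, represented by the cyclic sequence of its vertices
(`Cycle V` is the quotient of lists by rotation): it is nonempty, its vertices are distinct,
consecutive vertices are joined consistently by an edge, and its edges are distinct.
(In a simple graph an edge is determined by its endpoints, so distinctness of edges only
constrains 2-cycles: a 2-cycle must use two distinct edges joining its two vertices.) -/
def IsCycle (G : MixedGraph V) (c : Cycle V) : Prop :=
  c ≠ Cycle.nil ∧ Cycle.Nodup c ∧ Cycle.Chain G.Adj c ∧
    ∀ a b : V, c = (↑[a, b] : Cycle V) →
      (s(a, b) ∈ G.E ∧ (b, a) ∈ G.A) ∨ ((a, b) ∈ G.A ∧ s(a, b) ∈ G.E) ∨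
        ((a, b) ∈ G.A ∧ (b, a) ∈ G.A)

/-- A cycle cover of a mixed graph: a family of cycles such that every vertex is contained
in exactly one cycle of the family. -/
def IsCycleCover (G : MixedGraph V) (C : Set (Cycle V)) : Prop :=
  (∀ c ∈ C, G.IsCycle c) ∧ ∀ v : V, ∃! c, c ∈ C ∧ v ∈ c

end MixedGraph

/-- `CycleStep c u w`: the vertex `w` immediately follows `u` on the cycle `c`. -/
def CycleStep {V : Type*} (c : Cycle V) (u w : V) : Prop :=
  ∃ l : List V, c = (↑(u :: w :: l) : Cycle V)

/-- `CoverStep C u w`: some cycle of the family `C` traverses the step from `u` to `w`. -/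
def CoverStep {V : Type*} (C : Set (Cycle V)) (u w : V) : Prop :=
  ∃ c ∈ C, CycleStep c u w

/-! A cycle cover determines its successor function `f`, which is a permutation without fixed
points whose cycles, written as `Equiv.Perm.toList`, are exactly the cycles of the cover: a cycle
of the cover is a cyclic permutation agreeing with `f` on its support, hence a cycle factor
of `f`. So the cover is recovered from `f`, and conversely the cycles of any permutation `π`
with `G.Adj v (π v)` and no fixed points form a cover. The condition `π (π v) ≠ v` excludes
exactly the cycles of length two, which would need two distinct edges between the same two
vertices and so cannot occur in a simple graph. -/

namespace Cycle

variable {α : Type*} [DecidableEq α]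

theorem chain_iff_forall_rel_next {r : α → α → Prop} {s : Cycle α} (hs : s.Nodup) :
    s.Chain r ↔ ∀ x (hx : x ∈ s), r x (s.next hs x hx) := by
  induction s using Quotient.inductionOn' with
  | h l =>
  cases l with
  | nil => simp
  | cons a m =>
    change List.IsChain r (a :: (m ++ [a])) ↔ ∀ x (hx : x ∈ a :: m), r x ((a :: m).next x hx)
    rw [← List.cons_append, List.isChain_cons_append_singleton_iff_forall₂,
      ← List.rotate_zero (m ++ [a]), ← List.rotate_cons_succ, ← List.pmap_next_eq_rotate_one _ hs,
      List.pmap_eq_map_attach]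
    nth_rw 1 [← List.attach_map_subtype_val (a :: m)]
    rw [List.forall₂_map_left_iff, List.forall₂_map_right_iff, List.forall₂_same]
    exact ⟨fun h x hx => h ⟨x, hx⟩ (List.mem_attach _ _), fun h x _ => h x.1 x.2⟩

theorem mem_support_formPerm_iff [Fintype α] {s : Cycle α} (hs : s.Nodup) (hnt : s.Nontrivial)
    {x : α} : x ∈ (s.formPerm hs).support ↔ x ∈ s := by
  rw [support_formPerm s hs hnt]
  induction s using Quotient.inductionOn'
  exact List.mem_toFinset

theorem eq_coe_toList_of_formPerm_eq [Fintype α] {s : Cycle α} (hs : s.Nodup)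
    (hnt : s.Nontrivial) {p : Equiv.Perm α} (hp : ∀ x ∈ s, s.formPerm hs x = p x) {v : α}
    (hv : v ∈ s) : s = (p.toList v : Cycle α) := by
  have hfactor : s.formPerm hs ∈ p.cycleFactorsFinset :=
    Equiv.Perm.mem_cycleFactorsFinset_iff.mpr
      ⟨isCycle_formPerm s hs hnt, fun x hx => hp x ((mem_support_formPerm_iff hs hnt).mp hx)⟩
  have hcycleOf := Equiv.Perm.cycle_is_cycleOf ((mem_support_formPerm_iff hs hnt).mpr hv) hfactor
  rw [← Equiv.Perm.formPerm_toList, ← formPerm_coe _ (Equiv.Perm.nodup_toList p v)] at hcycleOf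
  rcases formPerm_eq_formPerm_iff.mp hcycleOf with h | ⟨h, -⟩
  · exact h
  · exact absurd h (hs.nontrivial_iff.mp hnt)

end Cycle

namespace Equiv.Perm

variable {α : Type*} [Fintype α] [DecidableEq α]

def cycleSet (p : Perm α) : Set (Cycle α) :=
  Set.range fun v => (p.toList v : Cycle α)

theorem mem_coe_toList_self {p : Perm α} {v : α} (hv : p v ≠ v) :
    v ∈ (p.toList v : Cycle α) :=
  Cycle.mem_coe_iff.mpr (mem_toList_iff.mpr ⟨SameCycle.refl p v, mem_support.mpr hv⟩)

theorem next_coe_toList (p : Perm α) (v x : α) (h : (p.toList v : Cycle α).Nodup)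
    (hx : x ∈ (p.toList v : Cycle α)) : Cycle.next (p.toList v : Cycle α) h x hx = p x :=
  next_toList_eq_apply p v x (Cycle.mem_coe_iff.mp hx)

theorem apply_apply_eq_self_iff_length_toList_eq_two {p : Perm α} {v : α} (hv : p v ≠ v) :
    p (p v) = v ↔ (p.toList v).length = 2 := by
  have hsupp : v ∈ p.support := mem_support.mpr hv
  constructor
  · intro h
    refine le_antisymm (not_lt.mp fun hlt => ?_) (two_le_length_toList_iff_mem_support.mpr hsupp)
    have h02 := (nodup_toList p v).getElem_inj_iff.mp
      (show (p.toList v)[0] = (p.toList v)[2] by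
        rw [getElem_toList, getElem_toList, pow_two, mul_apply, h, pow_zero, one_apply])
    omega
  · intro h
    rw [length_toList] at h
    have := pow_mod_card_support_cycleOf_self_apply p 2 v
    rwa [h, Nat.mod_self, pow_zero, one_apply, pow_two, mul_apply, eq_comm] at this

end Equiv.Perm

namespace MixedGraph

variable {V : Type*} {G : MixedGraph V}

theorem not_adj_self (G : MixedGraph V) (v : V) : ¬ G.Adj v v := by
  rintro (h | h)
  · exact G.not_isDiag _ h (Sym2.mk_isDiag_iff.mpr rfl)
  · exact G.ne_of_mem _ h rfl

theorem IsCycle.nontrivial {c : Cycle V} (h : G.IsCycle c) : c.Nontrivial := by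
  obtain ⟨hnil, hnd, hchain, -⟩ := h
  refine hnd.nontrivial_iff.mpr fun hsub => ?_
  induction c using Quotient.inductionOn' with
  | h l =>
  match l with
  | [] => exact hnil rfl
  | [a] => exact G.not_adj_self a ((Cycle.chain_singleton _ _).mp hchain)
  | _ :: _ :: _ => simp [Cycle.length_subsingleton_iff] at hsub

theorem IsCycle.adj_next [DecidableEq V] {c : Cycle V} (h : G.IsCycle c) {v : V} (hv : v ∈ c) :
    G.Adj v (c.next h.2.1 v hv) :=
  (Cycle.chain_iff_forall_rel_next h.2.1).mp h.2.2.1 v hv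

theorem Simple.not_isCycle_pair (hG : G.Simple) (a b : V) : ¬ G.IsCycle (↑[a, b] : Cycle V) := by
  intro h
  rcases h.2.2.2 a b rfl with ⟨hE, hA⟩ | ⟨hA, hE⟩ | hAA
  · exact (hG b a).1 ⟨Sym2.eq_swap ▸ hE, hA⟩
  · exact (hG a b).1 ⟨hE, hA⟩
  · exact (hG a b).2 hAA

namespace IsCycleCover

variable [DecidableEq V] {C : Set (Cycle V)}

def IsSuccFun (hC : G.IsCycleCover C) (f : V → V) : Prop :=
  ∀ c (hc : c ∈ C), ∀ v (hv : v ∈ c), f v = c.next (hC.1 c hc).2.1 v hv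

variable {hC : G.IsCycleCover C} {f : V → V}

theorem IsSuccFun.unique {g : V → V} (hf : hC.IsSuccFun f) (hg : hC.IsSuccFun g) : f = g := by
  funext v
  obtain ⟨c, ⟨hc, hv⟩, -⟩ := hC.2 v
  rw [hf c hc v hv, hg c hc v hv]

theorem IsSuccFun.apply_mem (hf : hC.IsSuccFun f) {c : Cycle V} (hc : c ∈ C) {v : V}
    (hv : v ∈ c) : f v ∈ c := by
  rw [hf c hc v hv]
  exact Cycle.next_mem c _ v hv

theorem IsSuccFun.apply_eq_formPerm (hf : hC.IsSuccFun f) {c : Cycle V} (hc : c ∈ C) {v : V}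
    (hv : v ∈ c) : f v = c.formPerm (hC.1 c hc).2.1 v :=
  (hf c hc v hv).trans (Cycle.formPerm_apply_mem_eq_next c _ v hv).symm

theorem IsSuccFun.adj (hf : hC.IsSuccFun f) (v : V) : G.Adj v (f v) := by
  obtain ⟨c, ⟨hc, hv⟩, -⟩ := hC.2 v
  rw [hf c hc v hv]
  exact (hC.1 c hc).adj_next hv

theorem IsSuccFun.apply_ne (hf : hC.IsSuccFun f) (v : V) : f v ≠ v := fun h =>
  G.not_adj_self v (by simpa only [h] using hf.adj v)

theorem IsSuccFun.injective (hf : hC.IsSuccFun f) : Function.Injective f := by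
  intro u w huw
  obtain ⟨c, ⟨hc, hu⟩, -⟩ := hC.2 u
  obtain ⟨c', ⟨hc', hw⟩, -⟩ := hC.2 w
  obtain ⟨_, -, huniq⟩ := hC.2 (f u)
  obtain rfl : c = c' :=
    (huniq c ⟨hc, hf.apply_mem hc hu⟩).trans (huniq c' ⟨hc', huw ▸ hf.apply_mem hc' hw⟩).symm
  exact (Cycle.formPerm c _).injective <| by
    rw [← hf.apply_eq_formPerm hc hu, ← hf.apply_eq_formPerm hc hw, huw]

variable [Fintype V]

theorem IsSuccFun.bijective (hf : hC.IsSuccFun f) : Function.Bijective f :=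
  ⟨hf.injective, Finite.surjective_of_injective hf.injective⟩

theorem IsSuccFun.eq_coe_toList (hf : hC.IsSuccFun f) {p : Equiv.Perm V} (hp : ⇑p = f)
    {c : Cycle V} (hc : c ∈ C) {v : V} (hv : v ∈ c) : c = (p.toList v : Cycle V) :=
  Cycle.eq_coe_toList_of_formPerm_eq _ (hC.1 c hc).nontrivial
    (fun x hx => by rw [hp, hf.apply_eq_formPerm hc hx]) hv

theorem IsSuccFun.eq_cycleSet (hf : hC.IsSuccFun f) {p : Equiv.Perm V} (hp : ⇑p = f) :
    C = p.cycleSet := by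
  ext c
  constructor
  · intro hc
    obtain ⟨v, -, -, hv, -⟩ := (hC.1 c hc).nontrivial
    exact ⟨v, (hf.eq_coe_toList hp hc hv).symm⟩
  · rintro ⟨v, rfl⟩
    obtain ⟨c, ⟨hc, hv⟩, -⟩ := hC.2 v
    show (p.toList v : Cycle V) ∈ C
    rwa [← hf.eq_coe_toList hp hc hv]

theorem IsSuccFun.apply_apply_ne (hG : G.Simple) (hf : hC.IsSuccFun f) (v : V) :
    f (f v) ≠ v := by
  intro hffv
  let p : Equiv.Perm V := Equiv.ofBijective f hf.bijective
  obtain ⟨c, ⟨hc, hv⟩, -⟩ := hC.2 v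
  obtain ⟨a, b, hab⟩ := List.length_eq_two.mp
    ((Equiv.Perm.apply_apply_eq_self_iff_length_toList_eq_two (p := p) (hf.apply_ne v)).mp hffv)
  have hcycle := hC.1 c hc
  rw [hf.eq_coe_toList (p := p) rfl hc hv, hab] at hcycle
  exact hG.not_isCycle_pair a b hcycle

end IsCycleCover

variable [Fintype V] [DecidableEq V]

theorem isCycleCover_cycleSet {p : Equiv.Perm V}
    (hp : ∀ v, p v ≠ v ∧ p (p v) ≠ v ∧ G.Adj v (p v)) : G.IsCycleCover p.cycleSet := by
  refine ⟨?_, fun v => ⟨_, ⟨⟨v, rfl⟩, p.mem_coe_toList_self (hp v).1⟩, ?_⟩⟩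
  · rintro c ⟨v, rfl⟩
    have hnd : (p.toList v : Cycle V).Nodup := Cycle.nodup_coe_iff.mpr (p.nodup_toList v)
    refine ⟨fun h => ?_, hnd, ?_, fun a b h => absurd ?_ (hp v).2.1⟩
    · exact Cycle.notMem_nil v (h ▸ p.mem_coe_toList_self (hp v).1)
    · rw [Cycle.chain_iff_forall_rel_next hnd]
      intro x hx
      rw [p.next_coe_toList v x hnd hx]
      exact (hp x).2.2
    · rw [Equiv.Perm.apply_apply_eq_self_iff_length_toList_eq_two (hp v).1]
      exact (Cycle.coe_eq_coe.mp h).perm.length_eq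
  · rintro c ⟨⟨w, rfl⟩, hv⟩
    have hvw := Equiv.Perm.mem_toList_iff.mp (Cycle.mem_coe_iff.mp hv)
    exact Cycle.coe_eq_coe.mpr hvw.1.toList_isRotated

theorem isSuccFun_cycleSet {p : Equiv.Perm V} (hp : ∀ v, p v ≠ v ∧ p (p v) ≠ v ∧ G.Adj v (p v)) :
    (isCycleCover_cycleSet hp).IsSuccFun p := by
  rintro c ⟨w, rfl⟩ v hv
  exact (p.next_coe_toList w v _ hv).symm

end MixedGraph

/--
For a finite simple mixed graph `G`, the map sending a cycle cover of `G`
to its successor function (taking each vertex `v` to the vertex following `v` on the unique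
cycle of the cover through `v`) is a bijection between the set of cycle covers of `G` and
the set of permutations `π` of `V` such that for every vertex `v`: `π v ≠ v`,
`π (π v) ≠ v`, and either `{v, π v} ∈ E` or `(v, π v) ∈ A`.
-/
theorem stmt_1 {V : Type*} [Fintype V] [DecidableEq V]
    (G : MixedGraph V) (hG : G.Simple)
    (Φ : Set (Cycle V) → V → V)
    (hΦ : ∀ C (hC : G.IsCycleCover C), ∀ c (hc : c ∈ C), ∀ v (hv : v ∈ c),
      Φ C v = Cycle.next c ((hC.1 c hc).2.1) v hv) :
    Set.BijOn Φ {C : Set (Cycle V) | G.IsCycleCover C}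
      {f : V → V | Function.Bijective f ∧
        ∀ v : V, f v ≠ v ∧ f (f v) ≠ v ∧ G.Adj v (f v)} := by
  have hsucc : ∀ C (hC : G.IsCycleCover C), hC.IsSuccFun (Φ C) := hΦ
  refine ⟨fun C hC => ?_, fun C₁ hC₁ C₂ hC₂ hΦC => ?_, fun f ⟨hf, hp⟩ => ?_⟩
  · have hf := hsucc C hC
    exact ⟨hf.bijective, fun v => ⟨hf.apply_ne v, hf.apply_apply_ne hG v, hf.adj v⟩⟩
  · let p : Equiv.Perm V := Equiv.ofBijective (Φ C₁) (hsucc C₁ hC₁).bijective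
    rw [(hsucc C₁ hC₁).eq_cycleSet (p := p) rfl, (hsucc C₂ hC₂).eq_cycleSet (p := p) hΦC]
  · let p : Equiv.Perm V := Equiv.ofBijective f hf
    have hC := MixedGraph.isCycleCover_cycleSet (p := p) hp
    exact ⟨p.cycleSet, hC, (hsucc _ hC).unique (MixedGraph.isSuccFun_cycleSet hp)⟩
end

section
/- Let S be a finite nonempty subset of ℤ × ℤ that is connected under orthogonal adjacency (two cells are adjacent if they differ by a unit vector), and suppose that every maximal horizontal run of S (maximal set of cells of S that are consecutive in a row) and every maximal vertical run of S (maximal set of cells of S that are consecutive in a column) consists of exactly 2 cells. Then S = {x₀, x₀+1} × {y₀, y₀+1} for some integers x₀, y₀; that is, S is a 2 × 2 square. -/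
/-- Two cells of `ℤ × ℤ` are orthogonally adjacent if they differ by a unit vector. -/
def CellAdj (p q : ℤ × ℤ) : Prop :=
  (p.1 - q.1).natAbs + (p.2 - q.2).natAbs = 1

/-- Generic one-dimensional "run" lemma: if a predicate `P` on `ℤ` is bounded on both
sides and every maximal run of `P` has length exactly 2, then each point satisfying `P`
has exactly one neighbour satisfying `P`, and nothing two steps away in that direction. -/
lemma run_xor (P : ℤ → Prop)
    (hlb : ∃ m : ℤ, ∀ t, P t → m ≤ t) (hub : ∃ M : ℤ, ∀ t, P t → t ≤ M)
    (hrun : ∀ a b : ℤ, a ≤ b → (∀ t, a ≤ t → t ≤ b → P t) → ¬P (a - 1) → ¬P (b + 1) →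
      b = a + 1)
    {x : ℤ} (hx : P x) :
    (P (x + 1) ∧ ¬P (x - 1) ∧ ¬P (x + 2)) ∨ (P (x - 1) ∧ ¬P (x + 1) ∧ ¬P (x - 2)) := by
  obtain ⟨m, hm⟩ := hlb
  obtain ⟨M, hM⟩ := hub
  -- least left endpoint
  have hQinh : ∃ t : ℤ, t ≤ x ∧ ∀ s, t ≤ s → s ≤ x → P s :=
    ⟨x, le_refl x, fun s hs hsx => by have : s = x := le_antisymm hsx hs; rwa [this]⟩
  have hQbdd : ∃ b : ℤ, ∀ t : ℤ, (t ≤ x ∧ ∀ s, t ≤ s → s ≤ x → P s) → b ≤ t :=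
    ⟨m, fun t ht => hm t (ht.2 t le_rfl ht.1)⟩
  obtain ⟨a, ⟨hax, haP⟩, hamin⟩ := Int.exists_least_of_bdd hQbdd hQinh
  -- greatest right endpoint
  have hRinh : ∃ t : ℤ, x ≤ t ∧ ∀ s, x ≤ s → s ≤ t → P s :=
    ⟨x, le_refl x, fun s hs hsx => by have : s = x := le_antisymm hsx hs; rwa [this]⟩
  have hRbdd : ∃ b : ℤ, ∀ t : ℤ, (x ≤ t ∧ ∀ s, x ≤ s → s ≤ t → P s) → t ≤ b :=
    ⟨M, fun t ht => hM t (ht.2 t ht.1 le_rfl)⟩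
  obtain ⟨b, ⟨hxb, hbP⟩, hbmax⟩ := Int.exists_greatest_of_bdd hRbdd hRinh
  have hab : a ≤ b := le_trans hax hxb
  have hint : ∀ t, a ≤ t → t ≤ b → P t := by
    intro t hat htb
    rcases le_total t x with h | h
    · exact haP t hat h
    · exact hbP t h htb
  have hnotL : ¬P (a - 1) := by
    intro h
    have : a ≤ a - 1 := by
      refine hamin (a - 1) ⟨by omega, fun s hs hsx => ?_⟩
      rcases eq_or_lt_of_le hs with h' | h'
      · rwa [← h']
      · exact haP s (by omega) hsx
    omega
  have hnotR : ¬P (b + 1) := by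
    intro h
    have : b + 1 ≤ b := by
      refine hbmax (b + 1) ⟨by omega, fun s hs hsx => ?_⟩
      rcases eq_or_lt_of_le hsx with h' | h'
      · rwa [h']
      · exact hbP s hs (by omega)
    omega
  have hba : b = a + 1 := hrun a b hab hint hnotL hnotR
  have hxa : x = a ∨ x = a + 1 := by omega
  rcases hxa with h | h
  · left
    refine ⟨hint (x + 1) (by omega) (by omega), ?_, ?_⟩
    · have : x - 1 = a - 1 := by omega
      rwa [this]
    · have : x + 2 = b + 1 := by omega
      rwa [this]
  · right
    refine ⟨hint (x - 1) (by omega) (by omega), ?_, ?_⟩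
    · have : x + 1 = b + 1 := by omega
      rwa [this]
    · have : x - 2 = a - 1 := by omega
      rwa [this]

/--
Let `S` be a finite nonempty subset of `ℤ × ℤ` that is connected under
orthogonal adjacency, and suppose every maximal horizontal run of `S` and every maximal
vertical run of `S` consists of exactly 2 cells.  Then `S = {x₀, x₀+1} × {y₀, y₀+1}` for
some integers `x₀, y₀`; that is, `S` is a 2 × 2 square.
-/
theorem stmt_9 (S : Set (ℤ × ℤ)) (hfin : S.Finite) (hne : S.Nonempty)
    (hconn : ∀ p ∈ S, ∀ q ∈ S,
      Relation.ReflTransGen (fun a b => a ∈ S ∧ b ∈ S ∧ CellAdj a b) p q)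
    (hH : ∀ y a b : ℤ, a ≤ b → (∀ x, a ≤ x → x ≤ b → (x, y) ∈ S) →
      (a - 1, y) ∉ S → (b + 1, y) ∉ S → b = a + 1)
    (hV : ∀ x a b : ℤ, a ≤ b → (∀ y, a ≤ y → y ≤ b → (x, y) ∈ S) →
      (x, a - 1) ∉ S → (x, b + 1) ∉ S → b = a + 1) :
    ∃ x₀ y₀ : ℤ,
      S = {p : ℤ × ℤ | (p.1 = x₀ ∨ p.1 = x₀ + 1) ∧ (p.2 = y₀ ∨ p.2 = y₀ + 1)} := by
  classical
  -- bounds on coordinates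
  have hlb1 : ∃ m : ℤ, ∀ p ∈ S, m ≤ p.1 := by
    obtain ⟨m, hm⟩ := (hfin.image Prod.fst).bddBelow
    exact ⟨m, fun p hp => hm ⟨p, hp, rfl⟩⟩
  have hub1 : ∃ M : ℤ, ∀ p ∈ S, p.1 ≤ M := by
    obtain ⟨M, hM⟩ := (hfin.image Prod.fst).bddAbove
    exact ⟨M, fun p hp => hM ⟨p, hp, rfl⟩⟩
  have hlb2 : ∃ m : ℤ, ∀ p ∈ S, m ≤ p.2 := by
    obtain ⟨m, hm⟩ := (hfin.image Prod.snd).bddBelow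
    exact ⟨m, fun p hp => hm ⟨p, hp, rfl⟩⟩
  have hub2 : ∃ M : ℤ, ∀ p ∈ S, p.2 ≤ M := by
    obtain ⟨M, hM⟩ := (hfin.image Prod.snd).bddAbove
    exact ⟨M, fun p hp => hM ⟨p, hp, rfl⟩⟩
  -- horizontal exclusive-or lemma
  have Hxor : ∀ x y : ℤ, (x, y) ∈ S →
      (((x + 1, y) ∈ S ∧ (x - 1, y) ∉ S ∧ (x + 2, y) ∉ S) ∨
       ((x - 1, y) ∈ S ∧ (x + 1, y) ∉ S ∧ (x - 2, y) ∉ S)) := by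
    intro x y hxy
    exact run_xor (fun t => (t, y) ∈ S)
      (hlb1.imp fun m hm t ht => hm (t, y) ht)
      (hub1.imp fun M hM t ht => hM (t, y) ht)
      (fun a b hab hint hna hnb => hH y a b hab hint hna hnb) hxy
  have Vxor : ∀ x y : ℤ, (x, y) ∈ S →
      (((x, y + 1) ∈ S ∧ (x, y - 1) ∉ S ∧ (x, y + 2) ∉ S) ∨
       ((x, y - 1) ∈ S ∧ (x, y + 1) ∉ S ∧ (x, y - 2) ∉ S)) := by
    intro x y hxy
    exact run_xor (fun t => (x, t) ∈ S)
      (hlb2.imp fun m hm t ht => hm (x, t) ht)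
      (hub2.imp fun M hM t ht => hM (x, t) ht)
      (fun a b hab hint hna hnb => hV x a b hab hint hna hnb) hxy
  -- pick a cell minimizing x + y, then (among those) minimizing y
  obtain ⟨p, hpS, hpmin⟩ := Set.exists_min_image S (fun q => q.1 + q.2) hfin hne
  obtain ⟨⟨x₀, y₀⟩, ⟨hqS, hqsum⟩, hqmin⟩ :=
    Set.exists_min_image {q ∈ S | q.1 + q.2 = p.1 + p.2} (fun q => q.2)
      (hfin.subset (fun q hq => hq.1)) ⟨p, hpS, rfl⟩
  simp only at hqsum
  -- the three "minimality" exclusions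
  have hA : (x₀ - 1, y₀) ∉ S := by
    intro h; have := hpmin _ h; simp only at this; omega
  have hB : (x₀, y₀ - 1) ∉ S := by
    intro h; have := hpmin _ h; simp only at this; omega
  have hC : (x₀ + 1, y₀ - 1) ∉ S := by
    intro h
    have h2 := hqmin (x₀ + 1, y₀ - 1) ⟨h, by simp only; omega⟩
    simp only at h2; omega
  -- build the square
  have h1 : (x₀, y₀) ∈ S := hqS
  have hR : (x₀ + 1, y₀) ∈ S ∧ (x₀ - 1, y₀) ∉ S ∧ (x₀ + 2, y₀) ∉ S := by
    rcases Hxor x₀ y₀ h1 with h | h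
    · exact h
    · exact absurd h.1 hA
  have hU : (x₀, y₀ + 1) ∈ S ∧ (x₀, y₀ - 1) ∉ S ∧ (x₀, y₀ + 2) ∉ S := by
    rcases Vxor x₀ y₀ h1 with h | h
    · exact h
    · exact absurd h.1 hB
  have hD : (x₀ + 1, y₀ + 1) ∈ S ∧ (x₀ + 1, y₀ - 1) ∉ S ∧ (x₀ + 1, y₀ + 2) ∉ S := by
    rcases Vxor (x₀ + 1) y₀ hR.1 with h | h
    · exact h
    · exact absurd h.1 hC
  have hE : (x₀ + 1, y₀ + 1) ∈ S ∧ (x₀ - 1, y₀ + 1) ∉ S ∧ (x₀ + 2, y₀ + 1) ∉ S := by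
    rcases Hxor x₀ (y₀ + 1) hU.1 with h | h
    · exact h
    · exact absurd hD.1 h.2.1
  refine ⟨x₀, y₀, Set.Subset.antisymm ?_ ?_⟩
  · -- S ⊆ square, via connectedness
    intro r hr
    have hpath := hconn (x₀, y₀) h1 r hr
    clear hr
    induction hpath with
    | refl => exact ⟨Or.inl rfl, Or.inl rfl⟩
    | @tail b c _ hstep ih =>
      obtain ⟨hbS, hcS, hadj⟩ := hstep
      obtain ⟨hb1, hb2⟩ := ih
      obtain ⟨c1, c2⟩ := c
      obtain ⟨b1, b2⟩ := b
      simp only [Set.mem_setOf_eq] at hb1 hb2 ⊢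
      unfold CellAdj at hadj
      simp only at hadj hb1 hb2 ⊢
      have step : (c1 = b1 + 1 ∧ c2 = b2) ∨ (c1 = b1 - 1 ∧ c2 = b2) ∨
          (c1 = b1 ∧ c2 = b2 + 1) ∨ (c1 = b1 ∧ c2 = b2 - 1) := by omega
      clear hadj
      have key : (c1 = x₀ - 1 ∧ c2 = y₀) ∨ (c1 = x₀ ∧ c2 = y₀ - 1) ∨
          (c1 = x₀ + 1 ∧ c2 = y₀ - 1) ∨ (c1 = x₀ - 1 ∧ c2 = y₀ + 1) ∨
          (c1 = x₀ + 2 ∧ c2 = y₀) ∨ (c1 = x₀ + 2 ∧ c2 = y₀ + 1) ∨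
          (c1 = x₀ ∧ c2 = y₀ + 2) ∨ (c1 = x₀ + 1 ∧ c2 = y₀ + 2) ∨
          ((c1 = x₀ ∨ c1 = x₀ + 1) ∧ (c2 = y₀ ∨ c2 = y₀ + 1)) := by
        clear hbS hcS
        rcases step with ⟨e1, e2⟩ | ⟨e1, e2⟩ | ⟨e1, e2⟩ | ⟨e1, e2⟩ <;>
          rcases hb1 with f1 | f1 <;> rcases hb2 with f2 | f2 <;> subst e1 <;>
          subst e2 <;> subst f1 <;> subst f2 <;> simp <;> omega
      rcases key with ⟨e1, e2⟩ | ⟨e1, e2⟩ | ⟨e1, e2⟩ | ⟨e1, e2⟩ | ⟨e1, e2⟩ | ⟨e1, e2⟩ |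
        ⟨e1, e2⟩ | ⟨e1, e2⟩ | h9
      · subst e1; subst e2; exact absurd hcS hA
      · subst e1; subst e2; exact absurd hcS hB
      · subst e1; subst e2; exact absurd hcS hC
      · subst e1; subst e2; exact absurd hcS hE.2.1
      · subst e1; subst e2; exact absurd hcS hR.2.2
      · subst e1; subst e2; exact absurd hcS hE.2.2
      · subst e1; subst e2; exact absurd hcS hU.2.2
      · subst e1; subst e2; exact absurd hcS hD.2.2
      · exact h9
  · -- square ⊆ S
    rintro ⟨r1, r2⟩ ⟨hr1 | hr1, hr2 | hr2⟩ <;> subst hr1 <;> subst hr2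
    · exact h1
    · exact hU.1
    · exact hR.1
    · exact hD.1
end

section
/- Let m, n ≥ 1, let the board be R = {0, …, m−1} × {0, …, n−1}, let s : R → Bool be a shading of the board that is a valid Choco Banana solution for a clue assignment containing three cells c₁, c₂, c₃ that form an L-tromino (up to rotation and reflection, {(x, y), (x+1, y), (x, y+1)} for some x, y), each carrying the same clue value p, where p is a prime number. Then all three cells c₁, c₂, c₃ are unshaded in s. -/
/-- The rectangular board `{0, …, m-1} × {0, …, n-1}` inside `ℤ × ℤ`. -/
def Board (m n : ℕ) : Set (ℤ × ℤ) :=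
  {p | 0 ≤ p.1 ∧ p.1 < (m : ℤ) ∧ 0 ≤ p.2 ∧ p.2 < (n : ℤ)}

/-- The block (connected component under orthogonal adjacency within `R` of cells having the
same shading) of the cell `p` for the shading `s`. -/
def Block (R : Set (ℤ × ℤ)) (s : ℤ × ℤ → Bool) (p : ℤ × ℤ) : Set (ℤ × ℤ) :=
  {q | Relation.ReflTransGen (fun a b => a ∈ R ∧ b ∈ R ∧ CellAdj a b ∧ s a = s b) p q}

/-- A set of cells is a rectangle if it equals `{a, …, b} × {c, …, d}` with `a ≤ b`, `c ≤ d`. -/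
def IsRect (T : Set (ℤ × ℤ)) : Prop :=
  ∃ a b c d : ℤ, a ≤ b ∧ c ≤ d ∧
    T = {q : ℤ × ℤ | a ≤ q.1 ∧ q.1 ≤ b ∧ c ≤ q.2 ∧ q.2 ≤ d}

/-- A shading `s` of the `m × n` board is a valid Choco Banana solution for the (partial)
clue assignment `clue`:  every shaded block is a rectangle, no unshaded block is a rectangle,
and the block of every clued cell has exactly the clued number of cells. -/
def ValidChocoBanana (m n : ℕ) (clue : ℤ × ℤ → Option ℕ) (s : ℤ × ℤ → Bool) : Prop :=
  (∀ p ∈ Board m n, s p = true → IsRect (Block (Board m n) s p)) ∧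
  (∀ p ∈ Board m n, s p = false → ¬ IsRect (Block (Board m n) s p)) ∧
  (∀ p ∈ Board m n, ∀ k : ℕ, clue p = some k → (Block (Board m n) s p).ncard = k)

/-!
A shaded block of prime area `p` is a rectangle, hence a `1 × p` or `p × 1` segment. If an
unshaded cell lies beside such a segment, the copy of the segment shifted onto that side is
unshaded and connected, so it lies in the cell's block; since unshaded blocks are not
rectangles, that block has more than `p` cells. Transposing if necessary, the block of a shaded
cell of the tromino is a row segment, and each placement of the other two cells forces the block
of one of them, of size `p`, to reach a cell beside a segment of length `p`.
-/

lemma cellAdj_comm {a b : ℤ × ℤ} : CellAdj a b ↔ CellAdj b a := by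
  unfold CellAdj; omega

lemma cellAdj_add_add {a b f : ℤ × ℤ} : CellAdj (a + f) (b + f) ↔ CellAdj a b := by
  simp [CellAdj]

lemma cellAdj_add_right (a f : ℤ × ℤ) : CellAdj a (a + f) ↔ f.1.natAbs + f.2.natAbs = 1 := by
  simp [CellAdj]

lemma cellAdj_swap {a b : ℤ × ℤ} : CellAdj a.swap b.swap ↔ CellAdj a b := by
  simp only [CellAdj, Prod.fst_swap, Prod.snd_swap, add_comm]

lemma board_finite (m n : ℕ) : (Board m n).Finite :=
  (Set.finite_Icc ((0 : ℤ), (0 : ℤ)) ((m : ℤ), (n : ℤ))).subset fun q ⟨h1, h2, h3, h4⟩ => by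
    simp only [Set.mem_Icc, Prod.le_def]; omega

lemma swap_mem_board {m n : ℕ} {q : ℤ × ℤ} : q.swap ∈ Board n m ↔ q ∈ Board m n := by
  simp only [Board, Set.mem_ofPred_eq, Prod.fst_swap, Prod.snd_swap]; tauto

lemma preimage_swap_board (m n : ℕ) : Prod.swap ⁻¹' Board m n = Board n m := by
  ext q; rw [Set.mem_preimage, ← swap_mem_board, Prod.swap_swap]

section Block

variable {R : Set (ℤ × ℤ)} {s : ℤ × ℤ → Bool} {u q r : ℤ × ℤ}

lemma mem_block_self (u : ℤ × ℤ) : u ∈ Block R s u := Relation.ReflTransGen.refl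

lemma shade_eq_of_mem_block (h : q ∈ Block R s u) : s q = s u := by
  induction h with
  | refl => rfl
  | tail _ hstep ih => exact hstep.2.2.2.symm.trans ih

lemma mem_of_mem_block (hu : u ∈ R) (h : q ∈ Block R s u) : q ∈ R := by
  induction h with
  | refl => exact hu
  | tail _ hstep _ => exact hstep.2.1

lemma mem_block_of_adj (h : q ∈ Block R s u) (hq : q ∈ R) (hr : r ∈ R) (hadj : CellAdj q r)
    (hs : s q = s r) : r ∈ Block R s u :=
  Relation.ReflTransGen.tail h ⟨hq, hr, hadj, hs⟩

lemma mem_block_comm (h : q ∈ Block R s u) : u ∈ Block R s q := by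
  induction h with
  | refl => exact mem_block_self _
  | tail _ hstep ih =>
    exact .head ⟨hstep.2.1, hstep.1, cellAdj_comm.1 hstep.2.2.1, hstep.2.2.2.symm⟩ ih

lemma block_eq_of_mem (h : q ∈ Block R s u) : Block R s q = Block R s u :=
  Set.ext fun _ => ⟨fun hx => h.trans hx, fun hx => (mem_block_comm h).trans hx⟩

lemma block_finite (hR : R.Finite) (hu : u ∈ R) : (Block R s u).Finite :=
  hR.subset fun _ => mem_of_mem_block hu

lemma shade_eq_false_of_adj_of_not_mem (hsu : s u = true) (hr : r ∈ Block R s u) (hrR : r ∈ R)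
    (hq : q ∈ R) (hadj : CellAdj r q) (hqu : q ∉ Block R s u) : s q = false := by
  rw [Bool.eq_false_iff, ← hsu]
  exact fun h => hqu (mem_block_of_adj hr hrR hq hadj ((shade_eq_of_mem_block hr).trans h.symm))

lemma exists_adj_of_one_lt_ncard_block (h : 1 < (Block R s u).ncard) :
    ∃ r, r ∈ R ∧ CellAdj u r ∧ s u = s r := by
  obtain ⟨q, hq, hqu⟩ := Set.exists_ne_of_one_lt_ncard h u
  rcases Relation.ReflTransGen.cases_head hq with rfl | ⟨r, hstep, -⟩
  · exact absurd rfl hqu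
  · exact ⟨r, hstep.2⟩

lemma swap_mem_block_comp_swap (h : q ∈ Block R s u) :
    q.swap ∈ Block (Prod.swap ⁻¹' R) (s ∘ Prod.swap) u.swap := by
  induction h with
  | refl => exact mem_block_self _
  | tail _ hstep ih =>
    refine mem_block_of_adj ih ?_ ?_ (cellAdj_swap.2 hstep.2.2.1) ?_ <;>
      simp [hstep.1, hstep.2.1, hstep.2.2.2]

lemma block_comp_swap (R : Set (ℤ × ℤ)) (s : ℤ × ℤ → Bool) (u : ℤ × ℤ) :
    Block (Prod.swap ⁻¹' R) (s ∘ Prod.swap) u = Prod.swap ⁻¹' Block R s u.swap := by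
  ext q
  refine ⟨fun h => ?_, fun h => by simpa using swap_mem_block_comp_swap h⟩
  simpa [Set.preimage_preimage, Function.comp_def] using swap_mem_block_comp_swap h

end Block

lemma isRect_iff_exists_prod {T : Set (ℤ × ℤ)} :
    IsRect T ↔ ∃ a b c d : ℤ, a ≤ b ∧ c ≤ d ∧ T = Set.Icc a b ×ˢ Set.Icc c d := by
  have hprod (a b c d : ℤ) : {q : ℤ × ℤ | a ≤ q.1 ∧ q.1 ≤ b ∧ c ≤ q.2 ∧ q.2 ≤ d} =
      Set.Icc a b ×ˢ Set.Icc c d := by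
    ext; simp only [Set.mem_prod, Set.mem_Icc, Set.mem_ofPred_eq, and_assoc]
  simp only [IsRect, hprod]

lemma IsRect.image_add {T : Set (ℤ × ℤ)} (h : IsRect T) (f : ℤ × ℤ) :
    IsRect ((· + f) '' T) := by
  obtain ⟨a, b, c, d, hab, hcd, rfl⟩ := h
  refine ⟨a + f.1, b + f.1, c + f.2, d + f.2, by omega, by omega, ?_⟩
  rw [Set.image_add_right]
  ext q
  simp only [Set.mem_preimage, Prod.fst_add, Prod.snd_add, Prod.fst_neg, Prod.snd_neg,
    Set.mem_ofPred_eq]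
  omega

lemma isRect_preimage_swap_iff {T : Set (ℤ × ℤ)} : IsRect (Prod.swap ⁻¹' T) ↔ IsRect T := by
  simp only [isRect_iff_exists_prod]
  constructor
  · rintro ⟨a, b, c, d, hab, hcd, hT⟩
    refine ⟨c, d, a, b, hcd, hab, ?_⟩
    rw [← Set.preimage_swap_prod, ← hT, Set.preimage_preimage]
    simp
  · rintro ⟨a, b, c, d, hab, hcd, rfl⟩
    exact ⟨c, d, a, b, hcd, hab, Set.preimage_swap_prod _ _⟩

lemma ncard_preimage_swap (T : Set (ℤ × ℤ)) : (Prod.swap ⁻¹' T).ncard = T.ncard :=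
  Set.ncard_preimage_of_injective_subset_range Prod.swap_injective
    fun q _ => ⟨q.swap, Prod.swap_swap q⟩

lemma IsRect.eq_segment_of_prime {T : Set (ℤ × ℤ)} (h : IsRect T) (hp : T.ncard.Prime) :
    (∃ a b y : ℤ, T = Set.Icc a b ×ˢ {y}) ∨ ∃ x c d : ℤ, T = {x} ×ˢ Set.Icc c d := by
  obtain ⟨a, b, c, d, -, -, rfl⟩ := isRect_iff_exists_prod.1 h
  rw [Set.ncard_prod, Nat.prime_mul_iff] at hp
  rcases hp with ⟨-, hcd⟩ | ⟨-, hab⟩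
  · obtain ⟨y, hy⟩ := Set.ncard_eq_one.1 hcd
    exact .inl ⟨a, b, y, by rw [hy]⟩
  · obtain ⟨x, hx⟩ := Set.ncard_eq_one.1 hab
    exact .inr ⟨x, c, d, by rw [hx]⟩

section Shift

variable {R : Set (ℤ × ℤ)} {s : ℤ × ℤ → Bool} {u f : ℤ × ℤ}

lemma image_add_block_subset (hR : ∀ r ∈ Block R s u, r + f ∈ R)
    (hs : ∀ r ∈ Block R s u, s (r + f) = s (u + f)) :
    (· + f) '' Block R s u ⊆ Block R s (u + f) := by
  rintro _ ⟨r, hr, rfl⟩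
  induction hr with
  | refl => exact mem_block_self _
  | tail ha hab ih =>
    exact mem_block_of_adj ih (hR _ ha) (hR _ (ha.tail hab)) (cellAdj_add_add.2 hab.2.2.1)
      ((hs _ ha).trans (hs _ (ha.tail hab)).symm)

/-- The shifted copy of the block lies in a single unshaded block, which is not a rectangle and
hence strictly larger than the copy. -/
theorem ncard_block_lt_of_shift (hR : R.Finite)
    (hnrect : ∀ q ∈ R, s q = false → ¬ IsRect (Block R s q))
    (hu : u ∈ R) (hsu : s u = true) (hrect : IsRect (Block R s u))
    (hf : f.1.natAbs + f.2.natAbs = 1) (hmem : ∀ r ∈ Block R s u, r + f ∈ R)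
    (hout : ∀ r ∈ Block R s u, r + f ∉ Block R s u)
    {r z : ℤ × ℤ} (hr : r ∈ Block R s u) (hz : r + f ∈ Block R s z) :
    (Block R s u).ncard < (Block R s z).ncard := by
  have hshift : ∀ r ∈ Block R s u, s (r + f) = false := fun r hr =>
    shade_eq_false_of_adj_of_not_mem hsu hr (mem_of_mem_block hu hr) (hmem r hr)
      ((cellAdj_add_right r f).2 hf) (hout r hr)
  have huu := mem_block_self (R := R) (s := s) u
  have hsub := image_add_block_subset hmem fun r hr => (hshift r hr).trans (hshift u huu).symm
  rw [← block_eq_of_mem hz, block_eq_of_mem (hsub ⟨r, hr, rfl⟩),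
    ← Set.ncard_image_of_injective _ (add_left_injective f)]
  refine Set.ncard_lt_ncard (Set.ssubset_iff_subset_ne.2 ⟨hsub, fun heq => ?_⟩)
    (block_finite hR (hmem u huu))
  exact hnrect _ (hmem u huu) (hshift u huu) (heq ▸ hrect.image_add f)

end Shift

def BlockShapesValid (m n : ℕ) (s : ℤ × ℤ → Bool) : Prop :=
  (∀ q ∈ Board m n, s q = true → IsRect (Block (Board m n) s q)) ∧
  (∀ q ∈ Board m n, s q = false → ¬ IsRect (Block (Board m n) s q))

section Board

variable {m n : ℕ} {s : ℤ × ℤ → Bool}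

lemma ValidChocoBanana.blockShapesValid {clue : ℤ × ℤ → Option ℕ}
    (h : ValidChocoBanana m n clue s) : BlockShapesValid m n s :=
  ⟨h.1, h.2.1⟩

lemma block_board_comp_swap (q : ℤ × ℤ) :
    Block (Board n m) (s ∘ Prod.swap) q = Prod.swap ⁻¹' Block (Board m n) s q.swap := by
  rw [← preimage_swap_board, block_comp_swap]

lemma BlockShapesValid.comp_swap (h : BlockShapesValid m n s) :
    BlockShapesValid n m (s ∘ Prod.swap) := by
  refine ⟨fun q hq hs => ?_, fun q hq hs hrect => ?_⟩
  · rw [block_board_comp_swap, isRect_preimage_swap_iff]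
    exact h.1 _ (swap_mem_board.2 hq) hs
  · rw [block_board_comp_swap, isRect_preimage_swap_iff] at hrect
    exact h.2 _ (swap_mem_board.2 hq) hs hrect

variable {u z z' : ℤ × ℤ}

theorem ncard_block_lt_of_mem_row_strip (hS : BlockShapesValid m n s) (hu : u ∈ Board m n)
    (hsu : s u = true) {a b y : ℤ} (hH : Block (Board m n) s u = Set.Icc a b ×ˢ {y})
    (hz : z ∈ Board m n) (hzy : z.2 = y + 1 ∨ z.2 = y - 1) (hza : z.1 ∈ Set.Icc a b)
    (hzz' : z ∈ Block (Board m n) s z') :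
    (Block (Board m n) s u).ncard < (Block (Board m n) s z').ncard := by
  refine ncard_block_lt_of_shift (board_finite m n) hS.2 hu hsu (hS.1 u hu hsu)
    (f := (0, z.2 - y)) (by simp only [Int.natAbs_zero]; omega) (fun r hr => ?_) (fun r hr => ?_)
    (r := (z.1, y)) (by simp [hH, hza]) (by simpa using hzz')
  · have hrB := mem_of_mem_block hu hr
    rw [hH] at hr
    simp only [Set.mem_prod, Set.mem_singleton_iff, Board, Set.mem_ofPred_eq] at hr hrB hz ⊢
    simp only [Prod.fst_add, Prod.snd_add]
    omega
  · simp only [hH, Set.mem_prod, Set.mem_singleton_iff, Prod.snd_add] at hr ⊢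
    omega

theorem ncard_block_lt_of_mem_column_strip (hS : BlockShapesValid m n s) (hu : u ∈ Board m n)
    (hsu : s u = true) {x c d : ℤ} (hV : Block (Board m n) s u = {x} ×ˢ Set.Icc c d)
    (hz : z ∈ Board m n) (hzx : z.1 = x + 1 ∨ z.1 = x - 1) (hzc : z.2 ∈ Set.Icc c d)
    (hzz' : z ∈ Block (Board m n) s z') :
    (Block (Board m n) s u).ncard < (Block (Board m n) s z').ncard := by
  refine ncard_block_lt_of_shift (board_finite m n) hS.2 hu hsu (hS.1 u hu hsu)
    (f := (z.1 - x, 0)) (by simp only [Int.natAbs_zero]; omega) (fun r hr => ?_) (fun r hr => ?_)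
    (r := (x, z.2)) (by simp [hV, hzc]) (by simpa using hzz')
  · have hrB := mem_of_mem_block hu hr
    rw [hV] at hr
    simp only [Set.mem_prod, Set.mem_singleton_iff, Board, Set.mem_ofPred_eq] at hr hrB hz ⊢
    simp only [Prod.fst_add, Prod.snd_add]
    omega
  · simp only [hV, Set.mem_prod, Set.mem_singleton_iff, Prod.fst_add] at hr ⊢
    omega

end Board

section Tromino

variable {m n : ℕ} {s : ℤ × ℤ → Bool}

lemma mk_mem_board {u v : ℤ × ℤ} (hu : u ∈ Board m n) (hv : v ∈ Board m n) :
    (u.1, v.2) ∈ Board m n :=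
  ⟨hu.1, hu.2.1, hv.2.2.1, hv.2.2.2⟩

/-- The block of `(v.1, u.2)` can only grow away from `u` and `v`, and both remaining neighbours
of `(v.1, u.2)` touch a cell beside one of the two segments. -/
theorem false_of_shaded_row_column_corner (hS : BlockShapesValid m n s) {u v : ℤ × ℤ}
    (hu : u ∈ Board m n) (hv : v ∈ Board m n) (hsu : s u = true) (hsv : s v = true)
    (hdiag : (v.1 = u.1 + 1 ∨ v.1 = u.1 - 1) ∧ (v.2 = u.2 + 1 ∨ v.2 = u.2 - 1))
    {a b c d : ℤ} (hH : Block (Board m n) s u = Set.Icc a b ×ˢ {u.2})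
    (hV : Block (Board m n) s v = {v.1} ×ˢ Set.Icc c d)
    (hw : (v.1, u.2) ∈ Board m n) (hsw : s (v.1, u.2) = false)
    (hcu : (Block (Board m n) s u).ncard = (Block (Board m n) s (v.1, u.2)).ncard)
    (hcv : (Block (Board m n) s v).ncard = (Block (Board m n) s (v.1, u.2)).ncard)
    (hcw : 1 < (Block (Board m n) s (v.1, u.2)).ncard) : False := by
  have huH : u.1 ∈ Set.Icc a b := by
    simpa [hH] using mem_block_self (R := Board m n) (s := s) u
  have hvV : v.2 ∈ Set.Icc c d := by
    simpa [hV] using mem_block_self (R := Board m n) (s := s) v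
  have hwV : u.2 ∉ Set.Icc c d := fun h => by
    have hwv : (v.1, u.2) ∈ Block (Board m n) s v := by simp [hV, h]
    simp [shade_eq_of_mem_block hwv, hsv] at hsw
  obtain ⟨r, hr, hwr, hsr⟩ := exists_adj_of_one_lt_ncard_block hcw
  have hwr' : r ∈ Block (Board m n) s (v.1, u.2) :=
    mem_block_of_adj (mem_block_self _) hw hr hwr hsr
  obtain rfl | rfl | rfl | rfl :
      r = u ∨ r = v ∨ r = (2 * v.1 - u.1, u.2) ∨ r = (v.1, 2 * u.2 - v.2) := by
    simp only [CellAdj, Prod.ext_iff] at hwr ⊢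
    omega
  · simp [hsw, hsu] at hsr
  · simp [hsw, hsv] at hsr
  · have hz := mk_mem_board hr hv
    have hsz : s (2 * v.1 - u.1, v.2) = false := by
      exact shade_eq_false_of_adj_of_not_mem hsv (mem_block_self v) hv hz
        (by simp only [CellAdj]; omega) (by simp [hV]; omega)
    have := ncard_block_lt_of_mem_column_strip hS hv hsv hV hz (by omega) hvV
      (mem_block_of_adj hwr' hr hz (by simp only [CellAdj]; omega)
        ((hsr.symm.trans hsw).trans hsz.symm))
    omega
  · have hz := mk_mem_board hu hr
    have hsz : s (u.1, 2 * u.2 - v.2) = false := by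
      exact shade_eq_false_of_adj_of_not_mem hsu (mem_block_self u) hu hz
        (by simp only [CellAdj]; omega) (by simp [hH]; omega)
    have := ncard_block_lt_of_mem_row_strip hS hu hsu hH hz (by omega) huH
      (mem_block_of_adj hwr' hr hz (by simp only [CellAdj]; omega)
        ((hsr.symm.trans hsw).trans hsz.symm))
    omega

theorem false_of_shaded_of_row_segment (hS : BlockShapesValid m n s) {p : ℕ} (hp : p.Prime)
    {u v w : ℤ × ℤ} (hu : u ∈ Board m n) (hv : v ∈ Board m n) (hw : w ∈ Board m n)
    (hcu : (Block (Board m n) s u).ncard = p) (hcv : (Block (Board m n) s v).ncard = p)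
    (hcw : (Block (Board m n) s w).ncard = p)
    (hsq : ∃ x y : ℤ, u ∈ Set.Icc (x, y) (x + 1, y + 1) ∧ v ∈ Set.Icc (x, y) (x + 1, y + 1) ∧
      w ∈ Set.Icc (x, y) (x + 1, y + 1))
    (huv : u ≠ v) (huw : u ≠ w) (hvw : v ≠ w) (hsu : s u = true)
    {a b y : ℤ} (hH : Block (Board m n) s u = Set.Icc a b ×ˢ {y}) : False := by
  wlog hvu : v.2 ≠ u.2 generalizing v w
  · obtain ⟨x, y, hsqu, hsqv, hsqw⟩ := hsq
    refine this hw hv hcw hcv ⟨x, y, hsqu, hsqw, hsqv⟩ huw huv hvw.symm ?_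
    simp only [Set.mem_Icc, Prod.le_def, ne_eq, Prod.ext_iff] at *
    omega
  obtain ⟨x₀, y₀, hsq⟩ := hsq
  simp only [Set.mem_Icc, Prod.le_def] at hsq
  obtain ⟨huH, rfl⟩ : u.1 ∈ Set.Icc a b ∧ u.2 = y := by
    simpa [hH] using mem_block_self (R := Board m n) (s := s) u
  have hrow : ∀ z z', z ∈ Board m n → (z.2 = u.2 + 1 ∨ z.2 = u.2 - 1) → z.1 ∈ Set.Icc a b →
      z ∈ Block (Board m n) s z' → (Block (Board m n) s z').ncard ≠ p :=
    fun z z' hz hzy hza hzz' =>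
      (ncard_block_lt_of_mem_row_strip hS hu hsu hH hz hzy hza hzz').ne'.trans_eq hcu
  by_cases hva : v.1 ∈ Set.Icc a b
  · exact hrow v v hv (by omega) hva (mem_block_self v) hcv
  rw [Set.mem_Icc] at hva huH
  obtain rfl | rfl : w = (u.1, v.2) ∨ w = (v.1, u.2) := by
    simp only [ne_eq, Prod.ext_iff] at huv huw hvw ⊢
    omega
  · exact hrow _ _ hw (by omega) huH (mem_block_self _) hcw
  have hsw : s (v.1, u.2) = false := by
    exact shade_eq_false_of_adj_of_not_mem hsu (mem_block_self u) hu hw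
      (by simp only [CellAdj]; omega) (by simp [hH]; omega)
  cases hsv : s v
  · have hz := mk_mem_board hu hv
    have hsz : s (u.1, v.2) = false := by
      exact shade_eq_false_of_adj_of_not_mem hsu (mem_block_self u) hu hz
        (by simp only [CellAdj]; omega) (by simp [hH]; omega)
    exact hrow _ v hz (by omega) huH
      (mem_block_of_adj (mem_block_self v) hv hz (by simp only [CellAdj]; omega)
        (hsv.trans hsz.symm)) hcv
  rcases (hS.1 v hv hsv).eq_segment_of_prime (hcv ▸ hp) with ⟨a', b', y', hV⟩ | ⟨x', c, d, hV⟩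
  · have hvV : v.1 ∈ Set.Icc a' b' ∧ v.2 = y' := by
      simpa [hV] using mem_block_self (R := Board m n) (s := s) v
    have := ncard_block_lt_of_mem_row_strip hS hv hsv hV hw (by omega) hvV.1 (mem_block_self _)
    omega
  · obtain ⟨rfl, -⟩ : v.1 = x' ∧ v.2 ∈ Set.Icc c d := by
      simpa [hV] using mem_block_self (R := Board m n) (s := s) v
    exact false_of_shaded_row_column_corner hS hu hv hsu hsv (by omega) hH hV hw hsw
      (hcu.trans hcw.symm) (hcv.trans hcw.symm) (hcw ▸ hp.one_lt)

theorem false_of_shaded (hS : BlockShapesValid m n s) {p : ℕ} (hp : p.Prime)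
    {u v w : ℤ × ℤ} (hu : u ∈ Board m n) (hv : v ∈ Board m n) (hw : w ∈ Board m n)
    (hcu : (Block (Board m n) s u).ncard = p) (hcv : (Block (Board m n) s v).ncard = p)
    (hcw : (Block (Board m n) s w).ncard = p)
    (hsq : ∃ x y : ℤ, u ∈ Set.Icc (x, y) (x + 1, y + 1) ∧ v ∈ Set.Icc (x, y) (x + 1, y + 1) ∧
      w ∈ Set.Icc (x, y) (x + 1, y + 1))
    (huv : u ≠ v) (huw : u ≠ w) (hvw : v ≠ w) (hsu : s u = true) : False := by
  rcases (hS.1 u hu hsu).eq_segment_of_prime (hcu ▸ hp) with ⟨a, b, y, hH⟩ | ⟨x, c, d, hV⟩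
  · exact false_of_shaded_of_row_segment hS hp hu hv hw hcu hcv hcw hsq huv huw hvw hsu hH
  have hcard (q : ℤ × ℤ) : (Block (Board n m) (s ∘ Prod.swap) q.swap).ncard =
      (Block (Board m n) s q).ncard := by
    rw [block_board_comp_swap, ncard_preimage_swap, Prod.swap_swap]
  refine false_of_shaded_of_row_segment hS.comp_swap hp (swap_mem_board.2 hu)
    (swap_mem_board.2 hv) (swap_mem_board.2 hw) ((hcard u).trans hcu) ((hcard v).trans hcv)
    ((hcard w).trans hcw) ?_ (Prod.swap_injective.ne huv) (Prod.swap_injective.ne huw)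
    (Prod.swap_injective.ne hvw) hsu (a := c) (b := d) (y := x) ?_
  · obtain ⟨x, y, hsq⟩ := hsq
    refine ⟨y, x, ?_⟩
    simp only [Set.mem_Icc, Prod.le_def, Prod.fst_swap, Prod.snd_swap] at hsq ⊢
    omega
  · rw [block_board_comp_swap, Prod.swap_swap, hV, Set.preimage_swap_prod]

end Tromino

theorem stmt_10_general (m n : ℕ)
    (clue : ℤ × ℤ → Option ℕ) (s : ℤ × ℤ → Bool)
    (hvalid : ValidChocoBanana m n clue s)
    (c₁ c₂ c₃ : ℤ × ℤ) (p : ℕ) (hp : p.Prime)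
    (h1 : c₁ ∈ Board m n) (h2 : c₂ ∈ Board m n) (h3 : c₃ ∈ Board m n)
    (hc1 : clue c₁ = some p) (hc2 : clue c₂ = some p) (hc3 : clue c₃ = some p)
    (hne12 : c₁ ≠ c₂) (hne13 : c₁ ≠ c₃) (hne23 : c₂ ≠ c₃)
    (hL : ∃ x y : ℤ,
      (c₁.1 = x ∨ c₁.1 = x + 1) ∧ (c₁.2 = y ∨ c₁.2 = y + 1) ∧
      (c₂.1 = x ∨ c₂.1 = x + 1) ∧ (c₂.2 = y ∨ c₂.2 = y + 1) ∧
      (c₃.1 = x ∨ c₃.1 = x + 1) ∧ (c₃.2 = y ∨ c₃.2 = y + 1)) :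
    s c₁ = false ∧ s c₂ = false ∧ s c₃ = false := by
  have hS := hvalid.blockShapesValid
  have k1 := hvalid.2.2 c₁ h1 p hc1
  have k2 := hvalid.2.2 c₂ h2 p hc2
  have k3 := hvalid.2.2 c₃ h3 p hc3
  obtain ⟨x, y, hx1, hy1, hx2, hy2, hx3, hy3⟩ := hL
  have hsq (c : ℤ × ℤ) (hx : c.1 = x ∨ c.1 = x + 1) (hy : c.2 = y ∨ c.2 = y + 1) :
      c ∈ Set.Icc (x, y) (x + 1, y + 1) := by
    simp only [Set.mem_Icc, Prod.le_def]
    omega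
  have q1 := hsq c₁ hx1 hy1
  have q2 := hsq c₂ hx2 hy2
  have q3 := hsq c₃ hx3 hy3
  refine ⟨?_, ?_, ?_⟩ <;> refine Bool.eq_false_iff.2 fun hs => ?_
  · exact false_of_shaded hS hp h1 h2 h3 k1 k2 k3 ⟨x, y, q1, q2, q3⟩ hne12 hne13 hne23 hs
  · exact false_of_shaded hS hp h2 h1 h3 k2 k1 k3 ⟨x, y, q2, q1, q3⟩ hne12.symm hne23 hne13 hs
  · exact false_of_shaded hS hp h3 h1 h2 k3 k1 k2 ⟨x, y, q3, q1, q2⟩ hne13.symm hne23.symm hne12 hs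

/--
If a valid Choco Banana solution has three cells forming an L-tromino
(three distinct cells of some 2 × 2 square), each carrying the same prime clue `p`,
then all three cells are unshaded.
-/
theorem stmt_10 (m n : ℕ) (hm : 1 ≤ m) (hn : 1 ≤ n)
    (clue : ℤ × ℤ → Option ℕ) (s : ℤ × ℤ → Bool)
    (hvalid : ValidChocoBanana m n clue s)
    (c₁ c₂ c₃ : ℤ × ℤ) (p : ℕ) (hp : p.Prime)
    (h1 : c₁ ∈ Board m n) (h2 : c₂ ∈ Board m n) (h3 : c₃ ∈ Board m n)
    (hc1 : clue c₁ = some p) (hc2 : clue c₂ = some p) (hc3 : clue c₃ = some p)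
    (hne12 : c₁ ≠ c₂) (hne13 : c₁ ≠ c₃) (hne23 : c₂ ≠ c₃)
    (hL : ∃ x y : ℤ,
      (c₁.1 = x ∨ c₁.1 = x + 1) ∧ (c₁.2 = y ∨ c₁.2 = y + 1) ∧
      (c₂.1 = x ∨ c₂.1 = x + 1) ∧ (c₂.2 = y ∨ c₂.2 = y + 1) ∧
      (c₃.1 = x ∨ c₃.1 = x + 1) ∧ (c₃.2 = y ∨ c₃.2 = y + 1)) :
    s c₁ = false ∧ s c₂ = false ∧ s c₃ = false :=
  stmt_10_general m n clue s hvalid c₁ c₂ c₃ p hp h1 h2 h3 hc1 hc2 hc3 hne12 hne13 hne23 hL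
end
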